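/- If f ≃ f₁ + f₂ + ⋯ for simple functions fₙ, then the series ∑ₙ ∫ fₙ converges in E and ‖∑ₙ ∫ fₙ‖ ≤ ∫ ‖f(x)‖ dμ(x). -/

import Mathlib

open Filter Topology

section Defs

variable {X : Type*}

def IsSetRing (R : Set (Set X)) : Prop :=
  ∀ A ∈ R, ∀ B ∈ R, A ∪ B ∈ R ∧ A \ B ∈ R

def IsPremeasure (R : Set (Set X)) (μ : Set X → ℝ) : Prop :=
  (∀ A ∈ R, 0 ≤ μ A) ∧
  ∀ A : ℕ → Set X, (∀ n, A n ∈ R) → Pairwise (Function.onFun Disjoint A) →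
    (⋃ n, A n) ∈ R → HasSum (fun n => μ (A n)) (μ (⋃ n, A n))

variable {E : Type*} [AddCommGroup E] [Module ℝ E]

/-- `f` is a simple function (finite combination of indicators of sets in `R`)
with integral `v = ∑ μ(Aᵢ) • vᵢ`. -/
def IsSimpleWithIntegral (R : Set (Set X)) (μ : Set X → ℝ) (f : X → E) (v : E) : Prop :=
  ∃ (n : ℕ) (c : Fin n → E) (A : Fin n → Set X),
    (∀ i, A i ∈ R) ∧
    (∀ x, f x = ∑ i, Set.indicator (A i) (fun _ => c i) x) ∧
    v = ∑ i, μ (A i) • c i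

def IsSimpleFunc (R : Set (Set X)) (μ : Set X → ℝ) (f : X → E) : Prop :=
  ∃ v, IsSimpleWithIntegral R μ f v

end Defs

section Banach

variable {X : Type*} {E : Type*} [NormedAddCommGroup E] [NormedSpace ℝ E]

/-- `f ≃ g₁ + g₂ + ⋯` : expansion of `f` in a series of simple functions. -/
def SeriesExpansion (R : Set (Set X)) (μ : Set X → ℝ) (f : X → E) (g : ℕ → X → E) : Prop :=
  (∀ n, IsSimpleFunc R μ (g n)) ∧
  (∃ c : ℕ → ℝ, (∀ n, IsSimpleWithIntegral R μ (fun x => ‖g n x‖) (c n)) ∧ Summable c) ∧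
  ∀ x, Summable (fun n => ‖g n x‖) → HasSum (fun n => g n x) (f x)

def BochnerIntegrable (R : Set (Set X)) (μ : Set X → ℝ) (f : X → E) : Prop :=
  ∃ g, SeriesExpansion R μ f g

def HasBochnerIntegral (R : Set (Set X)) (μ : Set X → ℝ) (f : X → E) (I : E) : Prop :=
  ∃ g, SeriesExpansion R μ f g ∧
    ∃ J : ℕ → E, (∀ n, IsSimpleWithIntegral R μ (g n) (J n)) ∧ HasSum J I

def IsNullSet (R : Set (Set X)) (μ : Set X → ℝ) (Z : Set X) : Prop :=
  HasBochnerIntegral R μ (Set.indicator Z fun _ => (1 : ℝ)) 0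

end Banach

/-!
Carathéodory's theorem extends `μ` to a measure `ν` on the σ-algebra generated by `R`. Simple
functions are `ν`-integrable with the prescribed integrals, and `∑ ∫ ‖gₙ‖ < ∞` makes `∑ gₙ`
converge `ν`-almost everywhere, hence to `f`; dominated convergence gives `∑ ∫ gₙ = ∫ f`, the same
argument applied to `‖f‖` identifies its integral, and the bound is `‖∫ f‖ ≤ ∫ ‖f‖`.
-/

section

open MeasureTheory
open scoped ENNReal

variable {X : Type*} {R : Set (Set X)} {μ : Set X → ℝ}

theorem IsSetRing.isSetRing (hR : _root_.IsSetRing R) (h0 : ∅ ∈ R) :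
    MeasureTheory.IsSetRing R where
  empty_mem := h0
  union_mem _ _ hs ht := (hR _ hs _ ht).1
  sdiff_mem _ _ hs ht := (hR _ hs _ ht).2

theorem IsPremeasure.map_empty (hμ : IsPremeasure R μ) (h0 : ∅ ∈ R) : μ ∅ = 0 := by
  have h := hμ.2 (fun _ => ∅) (fun _ => h0) (fun _ _ _ => disjoint_bot_left) (by simpa using h0)
  rw [Set.iUnion_empty] at h
  exact tendsto_nhds_unique tendsto_const_nhds h.summable.tendsto_atTop_zero

theorem IsPremeasure.map_union (hμ : IsPremeasure R μ) (h0 : ∅ ∈ R) {s t : Set X}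
    (hs : s ∈ R) (ht : t ∈ R) (hst : s ∪ t ∈ R) (hd : Disjoint s t) :
    μ (s ∪ t) = μ s + μ t := by
  set A : ℕ → Set X := fun n => if n = 0 then s else if n = 1 then t else ∅
  have hA : ⋃ n, A n = s ∪ t := by
    ext x
    simp only [A, Set.mem_iUnion, Set.mem_union]
    constructor
    · rintro ⟨n, hn⟩
      split_ifs at hn <;> simp_all
    · rintro (hx | hx)
      exacts [⟨0, by simpa using hx⟩, ⟨1, by simpa using hx⟩]
  have hdA : Pairwise (Function.onFun Disjoint A) := by
    intro i j hij
    simp only [Function.onFun, A]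
    split_ifs <;> first | omega | exact hd | exact hd.symm | simp
  have h := hμ.2 A (fun n => by simp only [A]; split_ifs <;> assumption) hdA (hA ▸ hst)
  rw [hA] at h
  refine h.unique (hasSum_sum_of_ne_finset_zero (s := Finset.range 2) fun n hn => ?_)
    |>.trans (by simp [A, Finset.sum_range_succ])
  simp only [Finset.mem_range, not_lt] at hn
  simp [A, show n ≠ 0 by omega, show n ≠ 1 by omega, hμ.map_empty h0]

def ExtendsPremeasure [MeasurableSpace X] (ν : Measure X) (R : Set (Set X)) (μ : Set X → ℝ) :
    Prop :=
  ∀ A ∈ R, MeasurableSet A ∧ ν A ≠ ∞ ∧ ν.real A = μ A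

theorem exists_extendsPremeasure (hR : _root_.IsSetRing R) (hμ : IsPremeasure R μ) :
    ∃ (_ : MeasurableSpace X) (ν : Measure X), ExtendsPremeasure ν R μ := by
  by_cases h0 : ∅ ∈ R
  · have hR' := hR.isSetRing h0
    let m : AddContent ℝ≥0∞ R := hR'.addContent_of_union (fun s => ENNReal.ofReal (μ s))
      (by rw [hμ.map_empty h0, ENNReal.ofReal_zero]) fun hs ht hd => by
        rw [hμ.map_union h0 hs ht (hR'.union_mem hs ht) hd,
          ENNReal.ofReal_add (hμ.1 _ hs) (hμ.1 _ ht)]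
    have hm : m.IsSigmaSubadditive := isSigmaSubadditive_of_addContent_iUnion_eq_tsum hR'
      fun A hA hU hd => by
        have h := hμ.2 A hA hd hU
        exact (congrArg ENNReal.ofReal h.tsum_eq.symm).trans
          (ENNReal.ofReal_tsum_of_nonneg (fun n => hμ.1 _ (hA n)) h.summable)
    let _ : MeasurableSpace X := MeasurableSpace.generateFrom R
    let ν : Measure X := m.measure hR'.isSetSemiring le_rfl hm
    refine ⟨_, ν, fun A hA => ?_⟩
    have hνA : ν A = ENNReal.ofReal (μ A) := m.measure_eq hR'.isSetSemiring rfl hm hA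
    refine ⟨MeasurableSpace.measurableSet_generateFrom hA, by simp [hνA], ?_⟩
    rw [measureReal_def, hνA, ENNReal.toReal_ofReal (hμ.1 A hA)]
  · -- `R` is empty
    exact ⟨⊤, 0, fun A hA => absurd (by simpa using (hR A hA A hA).2) h0⟩

section Integral

variable [MeasurableSpace X] {ν : Measure X} {E : Type*} [NormedAddCommGroup E]

theorem ExtendsPremeasure.integrable_indicator_const (hν : ExtendsPremeasure ν R μ) {A : Set X}
    (hA : A ∈ R) (c : E) : Integrable (A.indicator fun _ => c) ν :=
  (integrableOn_const (hν A hA).2.1).integrable_indicator (hν A hA).1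

variable [NormedSpace ℝ E]

theorem IsSimpleWithIntegral.integrable (hν : ExtendsPremeasure ν R μ) {f : X → E} {v : E}
    (hf : IsSimpleWithIntegral R μ f v) : Integrable f ν := by
  obtain ⟨n, c, A, hA, hfA, -⟩ := hf
  rw [funext hfA]
  exact integrable_finsetSum _ fun i _ => hν.integrable_indicator_const (hA i) (c i)

theorem IsSimpleWithIntegral.integral_eq [CompleteSpace E] (hν : ExtendsPremeasure ν R μ)
    {f : X → E} {v : E} (hf : IsSimpleWithIntegral R μ f v) : ∫ x, f x ∂ν = v := by
  obtain ⟨n, c, A, hA, hfA, rfl⟩ := hf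
  rw [funext hfA, integral_finsetSum _ fun i _ => hν.integrable_indicator_const (hA i) (c i)]
  refine Finset.sum_congr rfl fun i _ => ?_
  rw [integral_indicator_const _ (hν _ (hA i)).1, (hν _ (hA i)).2.2]

variable {f : X → E} {g : ℕ → X → E}

theorem SeriesExpansion.integrable (hν : ExtendsPremeasure ν R μ) (hfg : SeriesExpansion R μ f g)
    (n : ℕ) : Integrable (g n) ν :=
  (hfg.1 n).choose_spec.integrable hν

theorem SeriesExpansion.summable_integral_norm (hν : ExtendsPremeasure ν R μ)
    (hfg : SeriesExpansion R μ f g) : Summable fun n => ∫ x, ‖g n x‖ ∂ν := by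
  obtain ⟨b, hb, hbsum⟩ := hfg.2.1
  simpa only [fun n => (hb n).integral_eq hν] using hbsum

theorem SeriesExpansion.ae_hasSum (hν : ExtendsPremeasure ν R μ) (hfg : SeriesExpansion R μ f g) :
    ∀ᵐ x ∂ν, HasSum (fun n => g n x) (f x) := by
  have hsum : ∑' n, eLpNorm (g n) 1 ν ≠ ∞ := by
    simp_rw [eLpNorm_one_eq_lintegral_enorm,
      ← ofReal_integral_norm_eq_lintegral_enorm (hfg.integrable hν _)]
    rw [← ENNReal.ofReal_tsum_of_nonneg (fun n => integral_nonneg fun x => norm_nonneg (g n x))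
      (hfg.summable_integral_norm hν)]
    exact ENNReal.ofReal_ne_top
  filter_upwards [summable_norm_of_tsum_eLpNorm_ne_top le_rfl
    (fun n => (hfg.integrable hν n).1) hsum] with x hx using hfg.2.2 x hx

theorem SeriesExpansion.hasSum_of_isSimpleWithIntegral [CompleteSpace E]
    (hν : ExtendsPremeasure ν R μ) (hfg : SeriesExpansion R μ f g) {J : ℕ → E}
    (hJ : ∀ n, IsSimpleWithIntegral R μ (g n) (J n)) : HasSum J (∫ x, f x ∂ν) := by
  have h := hasSum_integral_of_summable_integral_norm (hfg.integrable hν)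
    (hfg.summable_integral_norm hν)
  rwa [integral_congr_ae ((hfg.ae_hasSum hν).mono fun x hx => hx.tsum_eq),
    funext fun n => (hJ n).integral_eq hν] at h

theorem HasBochnerIntegral.integral_eq [CompleteSpace E] (hν : ExtendsPremeasure ν R μ) {I : E}
    (hf : HasBochnerIntegral R μ f I) : ∫ x, f x ∂ν = I := by
  obtain ⟨g, hfg, J, hJ, hJI⟩ := hf
  exact (hfg.hasSum_of_isSimpleWithIntegral hν hJ).unique hJI

end Integral
end

/-- If `f ≃ ∑ gₙ` then `∑ ∫ gₙ` converges and `‖∑ ∫ gₙ‖ ≤ ∫ ‖f‖`. -/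
theorem stmt3 {X E : Type*} [NormedAddCommGroup E] [NormedSpace ℝ E] [CompleteSpace E]
    {R : Set (Set X)} {μ : Set X → ℝ} (hR : IsSetRing R) (hμ : IsPremeasure R μ)
    (f : X → E) (g : ℕ → X → E) (hfg : SeriesExpansion R μ f g)
    (J : ℕ → E) (hJ : ∀ n, IsSimpleWithIntegral R μ (g n) (J n)) :
    (∃ I, HasSum J I) ∧
    ∀ (I : E) (c : ℝ), HasSum J I →
      HasBochnerIntegral R μ (fun x => ‖f x‖) c → ‖I‖ ≤ c := by
  obtain ⟨_, ν, hν⟩ := exists_extendsPremeasure hR hμ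
  have hJf := hfg.hasSum_of_isSimpleWithIntegral hν hJ
  refine ⟨⟨_, hJf⟩, fun I c hI hc => ?_⟩
  rw [hI.unique hJf, ← hc.integral_eq hν]
  exact MeasureTheory.norm_integral_le_integral_norm f
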